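/- For every coweight λ ∈ Z^n of GL_n, the element Θ^-_λ has a minimal expression: there exist a reduced expression t_λ = t_1 ⋯ t_r τ (t_i ∈ S_a, τ ∈ Ω) and signs ε_i ∈ {1, -1} such that Θ^-_λ = T̃_{t_1}^{ε_1} ⋯ T̃_{t_r}^{ε_r} T̃_τ. -/

import Mathlib

open scoped Classical

noncomputable section

/-- The coefficient ring `ℤ[q^{1/2}, q^{-1/2}]`, realized as Laurent polynomials
over `ℤ` in the variable `v = q^{1/2}`. -/
abbrev HckA : Type := LaurentPolynomial ℤ

/-- The element `q = v²` of `ℤ[q^{1/2}, q^{-1/2}]`. -/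
def qA : HckA := LaurentPolynomial.T 2

/-- The element `Q = q^{-1/2} - q^{1/2}`. -/
def QA : HckA := LaurentPolynomial.T (-1) - LaurentPolynomial.T 1

/-- A root system `(X^* , X_* , R, Ř, Π)` (with `Y = X^*`, `X = X_*`), together with
its finite Weyl group `W0` and its extended affine Weyl group `Wt = X_* ⋊ W0`,
with the canonical decomposition `g = t (lam g) * emb (fpart g)`. -/
structure AffineWeylSetup (Y X W0 Wt : Type)
    [AddCommGroup Y] [AddCommGroup X] [Group W0] [Group Wt] where
  /-- the perfect pairing `⟨·,·⟩ : X^* × X_* → ℤ` -/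
  pair : Y → X → ℤ
  pair_add_left : ∀ a b x, pair (a + b) x = pair a x + pair b x
  pair_add_right : ∀ a x y, pair a (x + y) = pair a x + pair a y
  /-- the finite set of roots `R ⊆ X^*` -/
  R : Finset Y
  /-- the simple roots `Π` -/
  Pi : Finset Y
  Pi_subset : Pi ⊆ R
  /-- the positive roots `R⁺` -/
  Rpos : Finset Y
  Rpos_subset : Rpos ⊆ R
  pos_or_neg : ∀ α ∈ R, α ∈ Rpos ∨ -α ∈ Rpos
  not_pos_and_neg : ∀ α ∈ R, ¬(α ∈ Rpos ∧ -α ∈ Rpos)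
  neg_mem : ∀ α ∈ R, -α ∈ R
  /-- the coroot `ᾰ ∈ X_*` attached to a root `α` -/
  coroot : Y → X
  /-- the action of `W0` on `X_*` -/
  act : W0 → X → X
  act_one : ∀ x, act 1 x = x
  act_mul : ∀ u v x, act (u * v) x = act u (act v x)
  act_add : ∀ u x y, act u (x + y) = act u x + act u y
  /-- the action of `W0` on `X^*` -/
  actY : W0 → Y → Y
  actY_one : ∀ a, actY 1 a = a
  actY_mul : ∀ u v a, actY (u * v) a = actY u (actY v a)
  act_pair : ∀ u a x, pair (actY u a) (act u x) = pair a x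
  actY_root : ∀ u, ∀ α ∈ R, actY u α ∈ R
  /-- the reflection `s_α ∈ W0` attached to a root `α` -/
  sref : Y → W0
  sref_act : ∀ α ∈ R, ∀ x, act (sref α) x = x - pair α x • coroot α
  sref_sq : ∀ α ∈ R, sref α * sref α = 1
  w0_gen : ∀ u : W0, u ∈ Subgroup.closure (sref '' ↑Pi)
  /-- the translation embedding `X_* → W̃`, `x ↦ t_x` -/
  t : X → Wt
  t_zero : t 0 = 1
  t_add : ∀ x y, t (x + y) = t x * t y
  /-- the embedding `W0 → W̃` -/
  emb : W0 →* Wt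
  conj_t : ∀ u x, emb u * t x = t (act u x) * emb u
  /-- the translation part `λ(g)` of `g = t_{λ(g)} w` -/
  lam : Wt → X
  /-- the finite part `w` of `g = t_{λ(g)} w` -/
  fpart : Wt → W0
  decomp : ∀ g, g = t (lam g) * emb (fpart g)
  lam_spec : ∀ x u, lam (t x * emb u) = x
  fpart_spec : ∀ x u, fpart (t x * emb u) = u

namespace AffineWeylSetup

variable {Y X W0 Wt : Type} [AddCommGroup Y] [AddCommGroup X] [Group W0] [Group Wt]
variable (S : AffineWeylSetup Y X W0 Wt)

/-- `λ ∈ X_*` is dominant if `⟨α, λ⟩ ≥ 0` for all simple roots `α`. -/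
def Dominant (x : X) : Prop := ∀ α ∈ S.Pi, 0 ≤ S.pair α x

/-- `λ ∈ X_*` is antidominant if `⟨α, λ⟩ ≤ 0` for all simple roots `α`. -/
def Antidominant (x : X) : Prop := ∀ α ∈ S.Pi, S.pair α x ≤ 0

/-- `λ ∈ X_*` is minuscule if `⟨α, λ⟩ ∈ {0, 1, -1}` for every root `α`. -/
def Minuscule (x : X) : Prop :=
  ∀ α ∈ S.R, S.pair α x = 0 ∨ S.pair α x = 1 ∨ S.pair α x = -1

/-- The partial order `⪯` on `X_*`: `x ⪯ y` iff `y - x` is a nonnegative integral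
combination of simple coroots. -/
def preceq (x y : X) : Prop :=
  ∃ c : Y → ℕ, y - x = ∑ α ∈ S.Pi, (c α : ℤ) • S.coroot α

/-- The partial order `⪯` on `X^*`: `a ⪯ b` iff `b - a` is a nonnegative integral
combination of simple roots. -/
def preceqY (a b : Y) : Prop :=
  ∃ c : Y → ℕ, b - a = ∑ α ∈ S.Pi, (c α : ℤ) • α

/-- `Π_m`: the set of `⪯`-minimal roots. -/
def Pim : Set Y := {β | β ∈ S.R ∧ ∀ γ ∈ S.R, S.preceqY γ β → γ = β}

/-- The length function on the extended affine Weyl group: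
`l(t_x w) = Σ_{α ∈ R⁺, w⁻¹ α ∈ R⁻} |⟨α,x⟩ - 1| + Σ_{α ∈ R⁺, w⁻¹ α ∈ R⁺} |⟨α,x⟩|`. -/
def len (g : Wt) : ℕ :=
  (∑ α ∈ S.Rpos.filter (fun α => S.actY (S.fpart g)⁻¹ α ∉ S.Rpos),
      (S.pair α (S.lam g) - 1).natAbs)
  + ∑ α ∈ S.Rpos.filter (fun α => S.actY (S.fpart g)⁻¹ α ∈ S.Rpos),
      (S.pair α (S.lam g)).natAbs

/-- The set `S_a` of simple affine reflections:
`{s_α : α ∈ Π} ∪ {t_{-ᾰ} s_α : α ∈ Π_m}`. -/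
def Sa : Set Wt :=
  ((fun α => S.emb (S.sref α)) '' ↑S.Pi) ∪
    ((fun β => S.t (-(S.coroot β)) * S.emb (S.sref β)) '' S.Pim)

/-- `Ω`: the length-zero elements of the extended affine Weyl group. -/
def Omega : Set Wt := {g | S.len g = 0}

/-- The affine Weyl group `W_a`, generated by `S_a`. -/
def Wa : Subgroup Wt := Subgroup.closure S.Sa

/-- `IsReducedWord S L τ g` says that `g = s_1 ⋯ s_r τ` is a reduced expression,
where `L = [s_1, …, s_r]` is a list of elements of `S_a` with `r = l(g)` and `τ ∈ Ω`. -/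
def IsReducedWord (L : List Wt) (τ g : Wt) : Prop :=
  (∀ s ∈ L, s ∈ S.Sa) ∧ τ ∈ S.Omega ∧ g = L.prod * τ ∧ L.length = S.len g

/-- The (extended) Bruhat order on `W̃`, via the subword property: `x ≤ y` iff `x` is
obtained from a reduced expression `y = s_1 ⋯ s_r τ` by taking a subword of `s_1 ⋯ s_r`
(keeping the same `τ ∈ Ω`). -/
def bruhatLE (x y : Wt) : Prop :=
  ∃ L τ, S.IsReducedWord L τ y ∧ ∃ L' : List Wt, L'.Sublist L ∧ x = L'.prod * τ

/-- The right translation part `t(x)` in the decomposition `x = w t_{t(x)}`. -/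
def rlam (g : Wt) : X := S.act (S.fpart g)⁻¹ (S.lam g)

/-- The `μ`-admissible set `Adm(μ) = {x : x ≤ t_{w(μ)} for some w ∈ W0}`. -/
def Adm (μ : X) : Set Wt := {x | ∃ w : W0, S.bruhatLE x (S.t (S.act w μ))}

end AffineWeylSetup

/-- The affine Hecke algebra attached to an `AffineWeylSetup`: an algebra `H` over
`ℤ[q^{1/2}, q^{-1/2}]` with basis `T_w` (`w ∈ W̃`), satisfying the braid relations
`T_g T_{g'} = T_{g g'}` when lengths add, and the quadratic relations
`(T_s + 1)(T_s - q) = 0` for `s ∈ S_a`.  Each `T_w` is invertible. -/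
structure HeckeAlg {Y X W0 Wt : Type}
    [AddCommGroup Y] [AddCommGroup X] [Group W0] [Group Wt]
    (S : AffineWeylSetup Y X W0 Wt) (H : Type) [Ring H] [Algebra HckA H] where
  /-- the Iwahori–Matsumoto basis `T_w` -/
  T : Module.Basis Wt HckA H
  T_one : T 1 = 1
  T_mul : ∀ g g' : Wt, S.len (g * g') = S.len g + S.len g' → T g * T g' = T (g * g')
  T_quad : ∀ s ∈ S.Sa, (T s + 1) * (T s - algebraMap HckA H qA) = 0
  T_unit : ∀ g : Wt, IsUnit (T g)

namespace HeckeAlg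

variable {Y X W0 Wt : Type} [AddCommGroup Y] [AddCommGroup X] [Group W0] [Group Wt]
variable {S : AffineWeylSetup Y X W0 Wt} {H : Type} [Ring H] [Algebra HckA H]

/-- The renormalized basis element `T̃_w = q^{-l(w)/2} T_w`. -/
def Tt (hk : HeckeAlg S H) (g : Wt) : H :=
  (LaurentPolynomial.T (-(S.len g : ℤ)) : HckA) • hk.T g

/-- The coefficient of `T̃_x` in an element `h ∈ H`, i.e. `h = Σ_x (coeffTt h x) T̃_x`. -/
def coeffTt (hk : HeckeAlg S H) (h : H) (x : Wt) : HckA :=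
  (LaurentPolynomial.T ((S.len x : ℤ)) : HckA) * hk.T.repr h x

/-- The support of an element of `H` with respect to the basis `(T̃_w)` (equivalently
`(T_w)`). -/
def supp (hk : HeckeAlg S H) (h : H) : Set Wt := {w | hk.T.repr h w ≠ 0}

/-- The `R`-polynomial `R̃_{x,y}`, defined by `T̃_{y⁻¹}⁻¹ = Σ_x R̃_{x,y} T̃_x`. -/
def Rt (hk : HeckeAlg S H) (x y : Wt) : HckA :=
  hk.coeffTt (Ring.inverse (hk.Tt y⁻¹)) x

/-- `Θ⁻` attached to a decomposition `λ = λ'_1 - λ'_2` (`λ'_i` antidominant):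
`Θ⁻_λ = T̃_{λ'_1} T̃_{λ'_2}⁻¹`. -/
def ThetaAnti (hk : HeckeAlg S H) (l1 l2 : X) : H :=
  hk.Tt (S.t l1) * Ring.inverse (hk.Tt (S.t l2))

/-- `Θ` attached to a decomposition `λ = λ_1 - λ_2` (`λ_i` dominant):
`Θ_λ = T̃_{λ_1} T̃_{λ_2}⁻¹`. -/
def ThetaDom (hk : HeckeAlg S H) (l1 l2 : X) : H :=
  hk.Tt (S.t l1) * Ring.inverse (hk.Tt (S.t l2))

end HeckeAlg

end
section GLn

/-- The `i`-th standard basis vector `e_i ∈ ℤⁿ` (`i : Fin n`). -/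
def stdE (n : ℕ) (i : Fin n) : Fin n → ℤ := fun j => if j = i then 1 else 0

/-- The standard basis vector `e_{i+1} ∈ ℤⁿ`, with a 0-based index `i : ℕ`. -/
def eN (n : ℕ) (i : ℕ) : Fin n → ℤ := fun j => if (j : ℕ) = i then 1 else 0

/-- `IsGLn n S` pins down an `AffineWeylSetup` as the root datum of `GL_n`:
`X_* = X^* = ℤⁿ`, `W0 = S_n` acting by permuting coordinates, roots `e_i - e_j`
(`i ≠ j`), positive roots `e_i - e_j` (`i < j`), simple roots `α_i = e_i - e_{i+1}`,
with `coroot (e_i - e_j) = e_i - e_j` and `s_{e_i - e_j}` the transposition `(i j)`. -/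
structure IsGLn (n : ℕ) {Wt : Type} [Group Wt]
    (S : AffineWeylSetup (Fin n → ℤ) (Fin n → ℤ) (Equiv.Perm (Fin n)) Wt) : Prop where
  pair_eq : ∀ a x, S.pair a x = ∑ i, a i * x i
  R_eq : S.R = Finset.univ.offDiag.image (fun p : Fin n × Fin n => stdE n p.1 - stdE n p.2)
  Rpos_eq : S.Rpos = (Finset.univ.offDiag.filter (fun p : Fin n × Fin n => p.1 < p.2)).image
      (fun p => stdE n p.1 - stdE n p.2)
  Pi_eq : S.Pi = (Finset.range (n-1)).image (fun j => eN n j - eN n (j+1))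
  coroot_eq : ∀ i j : Fin n, i ≠ j → S.coroot (stdE n i - stdE n j) = stdE n i - stdE n j
  act_eq : ∀ w x i, S.act w x i = x (w⁻¹ i)
  actY_eq : ∀ w a i, S.actY w a i = a (w⁻¹ i)
  sref_eq : ∀ i j : Fin n, i ≠ j → S.sref (stdE n i - stdE n j) = Equiv.swap i j

variable {n : ℕ} {Wt : Type} [Group Wt]

/-- The simple reflection `s_{j+1} = s_{α_{j+1}}` of `GL_n` (0-based index `j`,
so `srefGL S j` is the paper's `s_{j+1}`). -/
def srefGL (S : AffineWeylSetup (Fin n → ℤ) (Fin n → ℤ) (Equiv.Perm (Fin n)) Wt)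
    (j : ℕ) : Equiv.Perm (Fin n) :=
  S.sref (eN n j - eN n (j+1))

/-- The distinguished length-zero element `τ = t_{(1,0,…,0)} s_1 ⋯ s_{n-1} ∈ Ω` of `GL_n`. -/
def tauGL (S : AffineWeylSetup (Fin n → ℤ) (Fin n → ℤ) (Equiv.Perm (Fin n)) Wt) : Wt :=
  S.t (eN n 0) * S.emb ((List.range (n-1)).map (srefGL S)).prod

/-- The word `s_{k-1} ⋯ s_1` (1-based indices), as a list in `W̃`. -/
def SkList (S : AffineWeylSetup (Fin n → ℤ) (Fin n → ℤ) (Equiv.Perm (Fin n)) Wt)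
    (k : ℕ) : List Wt :=
  (List.range (k-1)).reverse.map (fun j => S.emb (srefGL S j))

/-- The word `s_{n-1} ⋯ s_k` (1-based indices), as a list in `W̃`. -/
def VkList (S : AffineWeylSetup (Fin n → ℤ) (Fin n → ℤ) (Equiv.Perm (Fin n)) Wt)
    (k : ℕ) : List Wt :=
  (List.range' (k-1) (n-k)).reverse.map (fun j => S.emb (srefGL S j))

end GLn

/-!
If every `t_i` in a word `x y⁻¹ = t_1 ⋯ t_r τ` is an involution changing the length of every
element by exactly one under left multiplication, and `l(τ y) = l(y)`, then peeling off
`t_1, t_2, …` with `T̃_s T̃_w = T̃_{sw}` (if `l(sw) > l(w)`) and `T̃_s⁻¹ T̃_w = T̃_{sw}`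
(if `l(sw) < l(w)`) gives `T̃_x T̃_y⁻¹ = T̃_{t_1}^{±1} ⋯ T̃_{t_r}^{±1} T̃_τ`. Apply this to
`x = t_{λ'_1}`, `y = t_{λ'_2}` and a reduced expression of `t_λ`.

For `GL_n` everything follows from `l(t_y u) = ∑_{a < b} |y_a - y_b - [u⁻¹ b < u⁻¹ a]|`.
Left multiplication by `t_z v` permutes the pairs and shifts each summand by an integer; for
`s_1, …, s_{n-1}` and `s_0 = t_{e_1 - e_n} (1 n)` only one summand moves, by `±1`, and for a
length-zero `τ` none does. Finally, if no `s_i` shortens `t_y u`, then `y` is weakly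
decreasing with total drop at most one, and `u⁻¹` is increasing wherever `y` is constant,
which forces every summand to vanish: reduced expressions exist.
-/

namespace AffineWeylSetup

variable {Y X W0 Wt : Type} [AddCommGroup Y] [AddCommGroup X] [Group W0] [Group Wt]
variable (S : AffineWeylSetup Y X W0 Wt)

theorem t_mul_emb_mul_t_mul_emb (x y : X) (u v : W0) :
    S.t x * S.emb u * (S.t y * S.emb v) = S.t (x + S.act u y) * S.emb (u * v) := by
  rw [S.t_add, map_mul, mul_assoc, ← mul_assoc (S.emb u), S.conj_t]
  group

theorem lam_one : S.lam 1 = 0 := by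
  simpa [S.t_zero] using S.lam_spec 0 1

theorem fpart_one : S.fpart 1 = 1 := by
  simpa [S.t_zero] using S.fpart_spec 0 1

theorem len_one : S.len 1 = 0 := by
  have hpair : ∀ α, S.pair α 0 = 0 := fun α => by
    simpa using S.pair_add_right α 0 0
  simp [len, lam_one, fpart_one, hpair, S.actY_one]

/-- What the Hecke algebra computation needs to know about a simple affine reflection. -/
def IsLengthReflection (s : Wt) : Prop :=
  s * s = 1 ∧ ∀ g, S.len (s * g) = S.len g + 1 ∨ S.len (s * g) + 1 = S.len g

variable {S}

theorem IsLengthReflection.len_eq_one {s : Wt} (hs : S.IsLengthReflection s) :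
    S.len s = 1 := by
  simpa [S.len_one] using hs.2 1

variable (S)

theorem exists_word_of_forall_exists_descent (G : Set Wt) (hG : ∀ s ∈ G, s * s = 1)
    (hdesc : ∀ g, S.len g ≠ 0 → ∃ s ∈ G, S.len (s * g) + 1 = S.len g) (g : Wt) :
    ∃ (L : List Wt) (τ : Wt), (∀ s ∈ L, s ∈ G) ∧ S.len τ = 0 ∧ g = L.prod * τ ∧
      L.length = S.len g := by
  induction hN : S.len g generalizing g with
  | zero => exact ⟨[], g, by simp, hN, by simp, rfl⟩
  | succ N ih =>
    obtain ⟨s, hs, hdown⟩ := hdesc g (by omega)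
    obtain ⟨L, τ, hL, hτ, hprod, hlen⟩ := ih (s * g) (by omega)
    refine ⟨s :: L, τ, ?_, hτ, ?_, by simp [hlen]⟩
    · simpa using ⟨hs, hL⟩
    · rw [List.prod_cons, mul_assoc, ← hprod, ← mul_assoc, hG s hs, one_mul]

end AffineWeylSetup

namespace HeckeAlg

open AffineWeylSetup

variable {Y X W0 Wt : Type} [AddCommGroup Y] [AddCommGroup X] [Group W0] [Group Wt]
variable {S : AffineWeylSetup Y X W0 Wt} {H : Type} [Ring H] [Algebra HckA H]
variable (hh : HeckeAlg S H)

theorem Tt_isUnit (g : Wt) : IsUnit (hh.Tt g) := by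
  rw [Tt, Algebra.smul_def]
  exact ((LaurentPolynomial.isUnit_T _).map _).mul (hh.T_unit g)

theorem Tt_mul_Tt {g g' : Wt} (h : S.len (g * g') = S.len g + S.len g') :
    hh.Tt g * hh.Tt g' = hh.Tt (g * g') := by
  simp only [Tt, smul_mul_assoc, mul_smul_comm, smul_smul, ← LaurentPolynomial.T_add,
    hh.T_mul g g' h, h]
  congr 3
  push_cast
  ring

theorem inverse_Tt_mul_Tt {s g : Wt} (hs : S.IsLengthReflection s)
    (hdown : S.len (s * g) + 1 = S.len g) :
    Ring.inverse (hh.Tt s) * hh.Tt g = hh.Tt (s * g) := by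
  have hsg : s * (s * g) = g := by rw [← mul_assoc, hs.1, one_mul]
  have hup : hh.Tt s * hh.Tt (s * g) = hh.Tt g := by
    rw [hh.Tt_mul_Tt (by rw [hsg, hs.len_eq_one]; omega), hsg]
  rw [← hup, ← mul_assoc, Ring.inverse_mul_cancel _ (hh.Tt_isUnit s), one_mul]

/-- `T̃_{t_1}^{ε_1} ⋯ T̃_{t_r}^{ε_r}`, where `true` encodes `ε = 1` and `false` encodes `ε = -1`. -/
noncomputable def signedProd (P : List (Wt × Bool)) : H :=
  (P.map (fun pr => if pr.2 then hh.Tt pr.1 else Ring.inverse (hh.Tt pr.1))).prod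

theorem exists_signedProd_mul_Tt {L : List Wt} (hL : ∀ s ∈ L, S.IsLengthReflection s) (g : Wt) :
    ∃ P : List (Wt × Bool), P.map Prod.fst = L ∧
      hh.signedProd P * hh.Tt g = hh.Tt (L.prod * g) := by
  induction L with
  | nil => exact ⟨[], rfl, by simp [signedProd]⟩
  | cons s L ih =>
    obtain ⟨P, hPL, hP⟩ := ih fun s' hs' => hL s' (List.mem_cons_of_mem s hs')
    have hs := hL s List.mem_cons_self
    rcases hs.2 (L.prod * g) with hup | hdown
    · refine ⟨(s, true) :: P, by simp [hPL], ?_⟩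
      simp only [signedProd, List.map_cons, List.prod_cons, if_true] at hP ⊢
      rw [mul_assoc, hP, mul_assoc s, hh.Tt_mul_Tt (by rw [hup, hs.len_eq_one]; omega)]
    · refine ⟨(s, false) :: P, by simp [hPL], ?_⟩
      simp only [signedProd, List.map_cons, List.prod_cons, Bool.false_eq_true, if_false] at hP ⊢
      rw [mul_assoc, hP, mul_assoc s, hh.inverse_Tt_mul_Tt hs hdown]

theorem exists_Tt_mul_inverse_Tt_eq {L : List Wt} (hL : ∀ s ∈ L, S.IsLengthReflection s)
    {τ x y : Wt} (hx : x = L.prod * τ * y) (hτy : S.len (τ * y) = S.len τ + S.len y) :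
    ∃ P : List (Wt × Bool), P.map Prod.fst = L ∧
      hh.Tt x * Ring.inverse (hh.Tt y) = hh.signedProd P * hh.Tt τ := by
  obtain ⟨P, hPL, hP⟩ := hh.exists_signedProd_mul_Tt hL (τ * y)
  refine ⟨P, hPL, ?_⟩
  rw [hx, mul_assoc, ← hP, ← hh.Tt_mul_Tt hτy, ← mul_assoc, mul_assoc,
    Ring.mul_inverse_cancel _ (hh.Tt_isUnit y), mul_one]

end HeckeAlg

section OrderLemmas

open Order

variable {α β : Type*} [LinearOrder α] [SuccOrder α] [IsSuccArchimedean α] [LinearOrder β]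

/-- For `w = u⁻¹`, the hypotheses say that `t_y u ∈ GL_n` has no descent among the simple
affine reflections, and the conclusion that it has length zero. -/
theorem eq_add_ite_of_forall_covBy {y : α → ℤ} {w : α → β} (hw : Function.Injective w)
    {lo hi : α} (hlo : IsBot lo) (hhi : IsTop hi)
    (hcov : ∀ a b, a ⋖ b → y b + (if w b < w a then 1 else 0) ≤ y a)
    (hwrap : y lo ≤ y hi + if w hi < w lo then 1 else 0)
    {a b : α} (hab : a < b) : y a = y b + if w b < w a then 1 else 0 := by
  have hanti : Antitone y := antitone_of_succ_le fun c hc => by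
    have := hcov c (succ c) (covBy_succ_of_not_isMax hc)
    split_ifs at this <;> omega
  have hflat : ∀ {c d}, c ≤ d → y c ≤ y d → w c ≤ w d := by
    intro c d hcd hy
    have hmono : StrictMonoOn w (Set.Icc c d) :=
      strictMonoOn_of_lt_succ Set.ordConnected_Icc fun e he hce hsucc => by
        have hstep := hcov e (succ e) (covBy_succ_of_not_isMax he)
        have : y (succ e) = y e := le_antisymm (hanti (le_succ e))
          (by linarith [hanti hce.1, hanti hsucc.2])
        have hne : w e ≠ w (succ e) := hw.ne (lt_succ_of_not_isMax he).ne
        split_ifs at hstep with hlt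
        · omega
        · exact lt_of_le_of_ne (not_lt.mp hlt) hne
    exact hmono.monotoneOn ⟨le_rfl, hcd⟩ ⟨hcd, le_rfl⟩ hcd
  have hba := hanti hab.le
  have hlo_a := hanti (hlo a)
  have hb_hi := hanti (hhi b)
  rcases le_or_gt (y a) (y b) with hy | hy
  · have hlt : w a < w b := lt_of_le_of_ne (hflat hab.le hy) (hw.ne hab.ne)
    rw [if_neg hlt.not_gt]
    omega
  · have hwrap' : w hi < w lo := by
      by_contra h
      rw [if_neg h] at hwrap
      omega
    rw [if_pos hwrap'] at hwrap
    have h1 : w lo ≤ w a := hflat (hlo a) (by omega)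
    have h2 : w b ≤ w hi := hflat (hhi b) (by omega)
    rw [if_pos ((h2.trans_lt hwrap').trans_le h1)]
    omega

end OrderLemmas

theorem CovBy.swap_lt_swap {α : Type*} [LinearOrder α] [DecidableEq α] {a b c d : α} (hab : a ⋖ b)
    (hcd : c < d) (hne : (c, d) ≠ (a, b)) : Equiv.swap a b c < Equiv.swap a b d := by
  have hle_a : ∀ x, x < b → x ≤ a := fun x hx => not_lt.mp fun h => hab.2 h hx
  have hb_le : ∀ x, a < x → b ≤ x := fun x hx => not_lt.mp fun h => hab.2 hx h
  have := hab.lt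
  simp only [Equiv.swap_apply_def, ne_eq, Prod.mk.injEq] at hne ⊢
  split_ifs <;> subst_vars
  all_goals first
    | exact absurd ⟨rfl, rfl⟩ hne
    | order
    | (have := hb_le _ hcd; order)
    | (have := hle_a _ hcd; order)

theorem sum_natAbs_add_eq_of_eq_single {ι : Type*} {s : Finset ι} {q : ι} (hq : q ∈ s)
    (d c : ι → ℤ) (hc : ∀ p ∈ s, p ≠ q → c p = 0) :
    ∑ p ∈ s, (d p + c p).natAbs + (d q).natAbs = ∑ p ∈ s, (d p).natAbs + (d q + c q).natAbs := by
  rw [← Finset.add_sum_erase _ _ hq, ← Finset.add_sum_erase _ _ hq,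
    Finset.sum_congr rfl fun p hp => by rw [hc p (Finset.mem_of_mem_erase hp)
      (Finset.ne_of_mem_erase hp), add_zero]]
  ring

section GLnCombinatorics

open Equiv

variable {n : ℕ}

def posPairs (n : ℕ) : Finset (Fin n × Fin n) :=
  Finset.univ.offDiag.filter fun p => p.1 < p.2

theorem mem_posPairs {p : Fin n × Fin n} : p ∈ posPairs n ↔ p.1 < p.2 := by
  simp [posPairs, Finset.mem_offDiag, and_iff_right_of_imp ne_of_lt]

/-- `l(t_y u) = ∑_{a < b} |glnLenTerm y u a b|`: this is the summand of the length formula at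
the positive root `e_a - e_b`. -/
def glnLenTerm (y : Fin n → ℤ) (u : Perm (Fin n)) (a b : Fin n) : ℤ :=
  y a - y b - if u⁻¹ b < u⁻¹ a then 1 else 0

def glnLen (y : Fin n → ℤ) (u : Perm (Fin n)) : ℕ :=
  ∑ p ∈ posPairs n, (glnLenTerm y u p.1 p.2).natAbs

/-- The change of `glnLenTerm` at `(a, b)` under left multiplication by `t_z v`
(see `glnLen_perm_mul`). -/
def glnShift (z : Fin n → ℤ) (v : Perm (Fin n)) (a b : Fin n) : ℤ :=
  z (v a) - z (v b) + if v b < v a then 1 else 0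

def sortPair (v : Perm (Fin n)) (p : Fin n × Fin n) : Fin n × Fin n :=
  if v p.1 < v p.2 then (v p.1, v p.2) else (v p.2, v p.1)

theorem sortPair_mem {v : Perm (Fin n)} {p : Fin n × Fin n} (hp : p ∈ posPairs n) :
    sortPair v p ∈ posPairs n := by
  have hne : v p.1 ≠ v p.2 := v.injective.ne (mem_posPairs.mp hp).ne
  unfold sortPair
  split_ifs with h
  · exact mem_posPairs.mpr h
  · exact mem_posPairs.mpr (lt_of_le_of_ne (not_lt.mp h) hne.symm)

theorem sortPair_inv_sortPair {v : Perm (Fin n)} {p : Fin n × Fin n} (hp : p ∈ posPairs n) :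
    sortPair v⁻¹ (sortPair v p) = p := by
  have hlt := mem_posPairs.mp hp
  unfold sortPair
  split_ifs <;> simp_all [not_lt_of_gt hlt]

theorem sum_sortPair {M : Type*} [AddCommMonoid M] (f : Fin n × Fin n → M) (v : Perm (Fin n)) :
    ∑ p ∈ posPairs n, f (sortPair v p) = ∑ p ∈ posPairs n, f p :=
  Finset.sum_nbij' (sortPair v) (sortPair v⁻¹) (fun _ => sortPair_mem) (fun _ => sortPair_mem)
    (fun _ => sortPair_inv_sortPair)
    (fun p hp => by simpa using sortPair_inv_sortPair (v := v⁻¹) hp) (fun _ _ => rfl)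

theorem glnLenTerm_perm_mul (z y : Fin n → ℤ) (v u : Perm (Fin n)) (a b : Fin n) :
    glnLenTerm (fun i => z i + y (v⁻¹ i)) (v * u) (v a) (v b) =
      z (v a) - z (v b) + glnLenTerm y u a b := by
  simp only [glnLenTerm, mul_inv_rev, Perm.mul_apply, Perm.coe_inv, Equiv.symm_apply_apply]
  ring

theorem glnLenTerm_comm (y : Fin n → ℤ) (u : Perm (Fin n)) {a b : Fin n} (hab : a ≠ b) :
    glnLenTerm y u b a = -glnLenTerm y u a b - 1 := by
  have hne : u⁻¹ a ≠ u⁻¹ b := (u⁻¹).injective.ne hab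
  unfold glnLenTerm
  split_ifs with h1 h2 h2
  · exact absurd (h1.trans h2) (lt_irrefl _)
  · ring
  · ring
  · exact absurd (lt_or_gt_of_ne hne) (by tauto)

theorem natAbs_glnLenTerm_sortPair (z y : Fin n → ℤ) (v u : Perm (Fin n)) {p : Fin n × Fin n}
    (hp : p ∈ posPairs n) :
    (glnLenTerm (fun i => z i + y (v⁻¹ i)) (v * u) (sortPair v p).1 (sortPair v p).2).natAbs =
      (glnLenTerm y u p.1 p.2 + glnShift z v p.1 p.2).natAbs := by
  have hne := (mem_posPairs.mp hp).ne
  unfold sortPair glnShift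
  split_ifs with h h'
  · exact absurd (h.trans h') (lt_irrefl _)
  · rw [glnLenTerm_perm_mul]
    congr 1
    ring
  · rw [glnLenTerm_perm_mul, glnLenTerm_comm y u hne, ← Int.natAbs_neg]
    congr 1
    ring
  · exact absurd (lt_or_gt_of_ne (v.injective.ne hne)) (by tauto)

/-- `t_z v · t_y u = t_{z + v y} (v u)`. -/
theorem glnLen_perm_mul (z y : Fin n → ℤ) (v u : Perm (Fin n)) :
    glnLen (fun i => z i + y (v⁻¹ i)) (v * u) =
      ∑ p ∈ posPairs n, (glnLenTerm y u p.1 p.2 + glnShift z v p.1 p.2).natAbs := by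
  rw [glnLen, ← sum_sortPair _ v]
  exact Finset.sum_congr rfl fun p hp => natAbs_glnLenTerm_sortPair z y v u hp

theorem glnShift_eq_zero_of_glnLen_eq_zero {z : Fin n → ℤ} {v : Perm (Fin n)}
    (hzv : glnLen z v = 0) {p : Fin n × Fin n} (hp : p ∈ posPairs n) :
    glnShift z v p.1 p.2 = 0 := by
  have hzero := Finset.sum_eq_zero_iff.mp hzv (sortPair v p) (sortPair_mem hp)
  have hlt := mem_posPairs.mp hp
  have hne : v p.1 ≠ v p.2 := v.injective.ne hlt.ne
  unfold sortPair at hzero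
  unfold glnShift
  split_ifs at hzero with h
  · simp only [glnLenTerm, Perm.coe_inv, symm_apply_apply, not_lt_of_gt hlt, if_false, sub_zero,
      Int.natAbs_eq_zero] at hzero
    rw [if_neg (not_lt_of_gt h)]
    omega
  · simp only [glnLenTerm, Perm.coe_inv, symm_apply_apply, hlt, if_true,
      Int.natAbs_eq_zero] at hzero
    rw [if_pos (lt_of_le_of_ne (not_lt.mp h) hne.symm)]
    omega

theorem stdE_sub_inj {i j i' j' : Fin n} (hij : i ≠ j) (hij' : i' ≠ j')
    (h : stdE n i - stdE n j = stdE n i' - stdE n j') : i = i' ∧ j = j' := by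
  have hi := congrFun h i
  have hj := congrFun h j
  simp only [stdE, Pi.sub_apply] at hi hj
  split_ifs at hi hj <;> simp_all

theorem glnShift_zero_swap {a b : Fin n} (hab : a ⋖ b) {p : Fin n × Fin n}
    (hp : p ∈ posPairs n) :
    glnShift 0 (swap a b) p.1 p.2 = if p = (a, b) then 1 else 0 := by
  simp only [glnShift, Pi.zero_apply, sub_self, zero_add]
  split_ifs with h1 h2 h2
  · rfl
  · exact absurd (hab.swap_lt_swap (mem_posPairs.mp hp) h2) (not_lt_of_gt h1)
  · subst h2
    simp [hab.lt] at h1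
  · rfl

theorem glnShift_stdE_sub_swap {a b : Fin n} (ha : IsBot a) (hb : IsTop b)
    {p : Fin n × Fin n} (hp : p ∈ posPairs n) :
    glnShift (stdE n a - stdE n b) (swap a b) p.1 p.2 = if p = (a, b) then -1 else 0 := by
  obtain ⟨c, d⟩ := p
  have hcd : c < d := mem_posPairs.mp hp
  have hab : a < b := ((ha c).trans_lt hcd).trans_le (hb d)
  simp only [glnShift, Prod.mk.injEq]
  by_cases hca : c = a <;> by_cases hdb : d = b
  · subst hca hdb
    simp [stdE, hab.ne, hab.ne', hab]
  · subst hca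
    have hdb' : d < b := lt_of_le_of_ne (hb d) hdb
    simp [stdE, swap_apply_of_ne_of_ne hcd.ne' hdb, hdb, hcd.ne', hdb', hab.ne']
  · subst hdb
    have hac : a < c := lt_of_le_of_ne (ha c) (Ne.symm hca)
    simp [stdE, swap_apply_of_ne_of_ne hca hcd.ne, hca, hcd.ne, hac, hab.ne]
  · have hcb : c ≠ b := (hcd.trans_le (hb d)).ne
    have hda : d ≠ a := ((ha c).trans_lt hcd).ne'
    simp [stdE, swap_apply_of_ne_of_ne hca hcb, swap_apply_of_ne_of_ne hda hdb, hca,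
      hcb, hda, hdb, not_lt_of_gt hcd]

theorem eN_val (i : Fin n) : eN n i = stdE n i := by
  funext j
  simp [eN, stdE, Fin.ext_iff]

/-- `x ↦ ∑_{i ≤ t} x_i`. Being nonnegative on simple roots, it is monotone for `⪯`. -/
noncomputable def partialSum (t : ℕ) : (Fin n → ℤ) →+ ℤ :=
  ∑ i ∈ Finset.univ.filter fun i : Fin n => (i : ℕ) ≤ t, Pi.evalAddMonoidHom (fun _ => ℤ) i

theorem partialSum_stdE (t : ℕ) (i : Fin n) :
    partialSum t (stdE n i) = if (i : ℕ) ≤ t then 1 else 0 := by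
  simp [partialSum, AddMonoidHom.finsetSum_apply, stdE, Finset.sum_ite_eq']

theorem partialSum_eN (t : ℕ) {j : ℕ} (hj : j < n) :
    partialSum t (eN n j) = if j ≤ t then 1 else 0 := by
  rw [show eN n j = stdE n ⟨j, hj⟩ from eN_val ⟨j, hj⟩, partialSum_stdE]

variable {Wt : Type} [Group Wt]

/-- `s_1, …, s_{n-1}` and `s_0 = t_{e_1 - e_n} (1 n)`. -/
def glnSimpleRefls (S : AffineWeylSetup (Fin n → ℤ) (Fin n → ℤ) (Perm (Fin n)) Wt) :
    Set Wt :=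
  {g | ∃ a b : Fin n, a ⋖ b ∧ g = S.emb (swap a b)} ∪
    {g | ∃ a b : Fin n, IsBot a ∧ IsTop b ∧ a ≠ b ∧
      g = S.t (stdE n a - stdE n b) * S.emb (swap a b)}

end GLnCombinatorics

namespace IsGLn

open Equiv AffineWeylSetup

variable {n : ℕ} {Wt : Type} [Group Wt]
variable {S : AffineWeylSetup (Fin n → ℤ) (Fin n → ℤ) (Perm (Fin n)) Wt} (hgl : IsGLn n S)
include hgl

theorem pair_stdE_sub (i j : Fin n) (x : Fin n → ℤ) :
    S.pair (stdE n i - stdE n j) x = x i - x j := by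
  simp [hgl.pair_eq, stdE, sub_mul, Finset.sum_sub_distrib]

theorem Rpos_eq_image : S.Rpos = (posPairs n).image fun p => stdE n p.1 - stdE n p.2 :=
  hgl.Rpos_eq

theorem stdE_sub_mem_Rpos {i j : Fin n} : stdE n i - stdE n j ∈ S.Rpos ↔ i < j := by
  rw [hgl.Rpos_eq_image]
  constructor
  · intro h
    obtain ⟨p, hp, heq⟩ := Finset.mem_image.mp h
    have hlt := mem_posPairs.mp hp
    obtain rfl | hij := eq_or_ne i j
    · simpa [stdE, hlt.ne] using congrFun heq p.1
    · obtain ⟨rfl, rfl⟩ := stdE_sub_inj hlt.ne hij heq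
      exact hlt
  · exact fun h => Finset.mem_image.mpr ⟨(i, j), mem_posPairs.mpr h, rfl⟩

theorem actY_stdE_sub (v : Perm (Fin n)) (i j : Fin n) :
    S.actY v (stdE n i - stdE n j) = stdE n (v i) - stdE n (v j) := by
  funext a
  simp only [hgl.actY_eq, stdE, Pi.sub_apply, Perm.inv_eq_iff_eq]

theorem len_t_mul_emb (x : Fin n → ℤ) (w : Perm (Fin n)) :
    S.len (S.t x * S.emb w) = glnLen x w := by
  have hinj : Set.InjOn (fun p : Fin n × Fin n => stdE n p.1 - stdE n p.2) ↑(posPairs n) :=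
    fun p hp q hq heq => Prod.ext_iff.mpr
      (stdE_sub_inj (mem_posPairs.mp hp).ne (mem_posPairs.mp hq).ne heq)
  rw [len, S.lam_spec, S.fpart_spec, Finset.sum_filter, Finset.sum_filter, hgl.Rpos_eq_image,
    Finset.sum_image hinj, Finset.sum_image hinj, ← Finset.sum_add_distrib, glnLen]
  refine Finset.sum_congr rfl fun p hp => ?_
  have hne : w⁻¹ p.1 ≠ w⁻¹ p.2 := (w⁻¹).injective.ne (mem_posPairs.mp hp).ne
  simp only [← hgl.Rpos_eq_image, hgl.actY_stdE_sub, hgl.stdE_sub_mem_Rpos, hgl.pair_stdE_sub,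
    glnLenTerm]
  rcases lt_or_gt_of_ne hne with h | h
  · rw [if_neg (not_not.mpr h), if_pos h, if_neg (not_lt_of_gt h), zero_add, sub_zero]
  · rw [if_pos (not_lt_of_gt h), if_neg (not_lt_of_gt h), if_pos h, add_zero]

theorem len_eq (g : Wt) : S.len g = glnLen (S.lam g) (S.fpart g) := by
  conv_lhs => rw [S.decomp g]
  exact hgl.len_t_mul_emb _ _

theorem len_t_mul_emb_mul (z : Fin n → ℤ) (v : Perm (Fin n)) (g : Wt) :
    S.len (S.t z * S.emb v * g) = ∑ p ∈ posPairs n,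
      (glnLenTerm (S.lam g) (S.fpart g) p.1 p.2 + glnShift z v p.1 p.2).natAbs := by
  have hact : z + S.act v (S.lam g) = fun i => z i + S.lam g (v⁻¹ i) :=
    funext fun i => by simp [hgl.act_eq]
  conv_lhs => rw [S.decomp g]
  rw [t_mul_emb_mul_t_mul_emb, hgl.len_t_mul_emb, hact, glnLen_perm_mul]

theorem len_mul_of_len_eq_zero {τ : Wt} (hτ : S.len τ = 0) (g : Wt) :
    S.len (τ * g) = S.len g := by
  rw [hgl.len_eq τ] at hτ
  conv_lhs => rw [S.decomp τ]
  rw [hgl.len_t_mul_emb_mul, hgl.len_eq g, glnLen]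
  refine Finset.sum_congr rfl fun p hp => ?_
  rw [glnShift_eq_zero_of_glnLen_eq_zero hτ hp, add_zero]

theorem len_swap_mul {a b : Fin n} (hab : a ⋖ b) (g : Wt) :
    S.len (S.emb (swap a b) * g) + (glnLenTerm (S.lam g) (S.fpart g) a b).natAbs =
      S.len g + (glnLenTerm (S.lam g) (S.fpart g) a b + 1).natAbs := by
  have hq : (a, b) ∈ posPairs n := mem_posPairs.mpr hab.lt
  rw [← one_mul (S.emb _), ← S.t_zero, hgl.len_t_mul_emb_mul, hgl.len_eq g, glnLen,
    sum_natAbs_add_eq_of_eq_single hq _ _ fun p hp hpq => by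
      rw [glnShift_zero_swap hab hp, if_neg hpq], glnShift_zero_swap hab hq, if_pos rfl]

theorem len_stdE_sub_swap_mul {a b : Fin n} (ha : IsBot a) (hb : IsTop b) (hab : a ≠ b) (g : Wt) :
    S.len (S.t (stdE n a - stdE n b) * S.emb (swap a b) * g) +
        (glnLenTerm (S.lam g) (S.fpart g) a b).natAbs =
      S.len g + (glnLenTerm (S.lam g) (S.fpart g) a b - 1).natAbs := by
  have hq : (a, b) ∈ posPairs n := mem_posPairs.mpr (lt_of_le_of_ne (ha b) hab)
  rw [hgl.len_t_mul_emb_mul, hgl.len_eq g, glnLen,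
    sum_natAbs_add_eq_of_eq_single hq _ _ fun p hp hpq => by
      rw [glnShift_stdE_sub_swap ha hb hp, if_neg hpq], glnShift_stdE_sub_swap ha hb hq,
    if_pos rfl, sub_eq_add_neg]

theorem mul_self_eq_one_of_mem_glnSimpleRefls {s : Wt} (hs : s ∈ glnSimpleRefls S) :
    s * s = 1 := by
  rcases hs with ⟨a, b, -, rfl⟩ | ⟨a, b, -, -, hab, rfl⟩
  · rw [← map_mul, swap_mul_self, map_one]
  · have hneg : S.act (swap a b) (stdE n a - stdE n b) = -(stdE n a - stdE n b) := by
      funext i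
      by_cases hia : i = a
      · subst hia
        simp [hgl.act_eq, stdE, hab, hab.symm]
      · by_cases hib : i = b
        · subst hib
          simp [hgl.act_eq, stdE, hab, hia]
        · simp [hgl.act_eq, stdE, swap_apply_of_ne_of_ne hia hib, hia, hib]
    rw [t_mul_emb_mul_t_mul_emb, hneg, add_neg_cancel, S.t_zero, swap_mul_self, map_one,
      one_mul]

theorem isLengthReflection_of_mem_glnSimpleRefls {s : Wt} (hs : s ∈ glnSimpleRefls S) :
    S.IsLengthReflection s := by
  refine ⟨hgl.mul_self_eq_one_of_mem_glnSimpleRefls hs, fun g => ?_⟩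
  rcases hs with ⟨a, b, hab, rfl⟩ | ⟨a, b, ha, hb, hab, rfl⟩
  · have := hgl.len_swap_mul hab g
    omega
  · have := hgl.len_stdE_sub_swap_mul ha hb hab g
    omega

theorem partialSum_nonneg_of_mem_Pi (t : ℕ) {α : Fin n → ℤ} (hα : α ∈ S.Pi) :
    0 ≤ partialSum t α := by
  rw [hgl.Pi_eq] at hα
  obtain ⟨j, hj, rfl⟩ := Finset.mem_image.mp hα
  have hj : j + 1 < n := by have := Finset.mem_range.mp hj; omega
  rw [map_sub, partialSum_eN t (by omega), partialSum_eN t hj]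
  split_ifs <;> omega

theorem stdE_sub_mem_Pim {a b : Fin n} (ha : IsBot a) (hb : IsTop b) (hab : a ≠ b) :
    stdE n b - stdE n a ∈ S.Pim := by
  have ha0 : (a : ℕ) = 0 := Nat.le_zero.mp (ha ⟨0, by omega⟩)
  have hbn : (b : ℕ) = n - 1 := le_antisymm (by omega) (hb ⟨n - 1, by omega⟩)
  have hn : 2 ≤ n := by have := Fin.val_ne_of_ne hab; omega
  refine ⟨hgl.R_eq ▸ Finset.mem_image.mpr ⟨(b, a), by simpa using hab.symm, rfl⟩, ?_⟩
  rintro γ hγ ⟨c, hc⟩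
  rw [hgl.R_eq] at hγ
  obtain ⟨⟨i, j⟩, -, rfl⟩ := Finset.mem_image.mp hγ
  have hsep : ∀ t, t < n - 1 → t < i ∧ (j : ℕ) ≤ t := by
    intro t ht
    have hle : 0 ≤ partialSum t (stdE n b - stdE n a - (stdE n i - stdE n j)) := by
      rw [hc, map_sum]
      exact Finset.sum_nonneg fun α hα => by
        rw [map_zsmul, smul_eq_mul]
        exact mul_nonneg (Int.natCast_nonneg _) (hgl.partialSum_nonneg_of_mem_Pi t hα)
    simp only [map_sub, partialSum_stdE] at hle
    split_ifs at hle <;> omega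
  have hi := (hsep (n - 2) (by omega)).1
  have hj := (hsep 0 (by omega)).2
  have hib : i = b := Fin.ext (by omega)
  have hja : j = a := Fin.ext (by omega)
  rw [hib, hja]

theorem glnSimpleRefls_subset_Sa : glnSimpleRefls S ⊆ S.Sa := by
  rintro s (⟨a, b, hab, rfl⟩ | ⟨a, b, ha, hb, hab, rfl⟩)
  · have hb : (b : ℕ) = a + 1 := (Nat.covBy_iff_add_one_eq.mp (Fin.covBy_iff.mp hab)).symm
    refine .inl ⟨eN n a - eN n (a + 1), ?_, ?_⟩
    · rw [Finset.mem_coe, hgl.Pi_eq]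
      exact Finset.mem_image.mpr ⟨a, Finset.mem_range.mpr (by omega), rfl⟩
    · simp only [← hb, eN_val, hgl.sref_eq a b hab.lt.ne]
  · refine .inr ⟨stdE n b - stdE n a, hgl.stdE_sub_mem_Pim ha hb hab, ?_⟩
    simp only [hgl.coroot_eq b a hab.symm, hgl.sref_eq b a hab.symm, neg_sub, swap_comm]

theorem exists_descent (g : Wt) (hg : S.len g ≠ 0) :
    ∃ s ∈ glnSimpleRefls S, S.len (s * g) + 1 = S.len g := by
  obtain ⟨q, hq, -⟩ := Finset.exists_ne_zero_of_sum_ne_zero (hgl.len_eq g ▸ hg)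
  have hn : 2 ≤ n := by
    have := q.2.isLt
    have := Fin.lt_def.mp (mem_posPairs.mp hq)
    omega
  let lo : Fin n := ⟨0, by omega⟩
  let hi : Fin n := ⟨n - 1, by omega⟩
  have hlo : IsBot lo := fun c => Nat.zero_le _
  have hhi : IsTop hi := fun c => Fin.le_def.mpr (by simp only [hi]; omega)
  have hne : lo ≠ hi := fun h => by simp only [Fin.ext_iff, lo, hi] at h; omega
  by_contra! hnone
  have hup : ∀ s ∈ glnSimpleRefls S, S.len (s * g) = S.len g + 1 := fun s hs =>
    ((hgl.isLengthReflection_of_mem_glnSimpleRefls hs).2 g).resolve_right (hnone s hs)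
  have hcov : ∀ a b, a ⋖ b →
      S.lam g b + (if (S.fpart g)⁻¹ b < (S.fpart g)⁻¹ a then 1 else 0) ≤ S.lam g a := by
    intro a b hab
    have := hgl.len_swap_mul hab g
    rw [hup _ (.inl ⟨a, b, hab, rfl⟩), glnLenTerm] at this
    omega
  have hwrap : S.lam g lo ≤ S.lam g hi + if (S.fpart g)⁻¹ hi < (S.fpart g)⁻¹ lo then 1 else 0 := by
    have := hgl.len_stdE_sub_swap_mul hlo hhi hne g
    rw [hup _ (.inr ⟨lo, hi, hlo, hhi, hne, rfl⟩), glnLenTerm] at this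
    omega
  refine hg ((hgl.len_eq g).trans (Finset.sum_eq_zero fun p hp => ?_))
  rw [Int.natAbs_eq_zero, glnLenTerm,
    eq_add_ite_of_forall_covBy (S.fpart g)⁻¹.injective hlo hhi hcov hwrap (mem_posPairs.mp hp)]
  ring

end IsGLn

open AffineWeylSetup HeckeAlg in
theorem gln_minimal_expression_general
    {Wt H : Type} [Group Wt] [Ring H] [Algebra HckA H]
    (n : ℕ)
    (S : AffineWeylSetup (Fin n → ℤ) (Fin n → ℤ) (Equiv.Perm (Fin n)) Wt)
    (hgl : IsGLn n S) (hh : HeckeAlg S H)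
    (lam l1 l2 : Fin n → ℤ)
    (hdec : lam = l1 - l2) :
    ∃ (P : List (Wt × Bool)) (τ : Wt),
      S.IsReducedWord (P.map Prod.fst) τ (S.t lam) ∧
      hh.ThetaAnti l1 l2 =
        (P.map (fun pr => if pr.2 then hh.Tt pr.1 else Ring.inverse (hh.Tt pr.1))).prod *
          hh.Tt τ := by
  obtain ⟨L, τ, hLgen, hτ, hprod, hlen⟩ :=
    S.exists_word_of_forall_exists_descent (glnSimpleRefls S)
      (fun _ hs => hgl.mul_self_eq_one_of_mem_glnSimpleRefls hs) hgl.exists_descent (S.t lam)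
  have ht : S.t l1 = L.prod * τ * S.t l2 := by rw [← hprod, ← S.t_add, hdec, sub_add_cancel]
  obtain ⟨P, rfl, hP⟩ := hh.exists_Tt_mul_inverse_Tt_eq
    (fun s hs => hgl.isLengthReflection_of_mem_glnSimpleRefls (hLgen s hs)) ht
    (by rw [hgl.len_mul_of_len_eq_zero hτ, hτ, zero_add])
  exact ⟨P, τ, ⟨fun s hs => hgl.glnSimpleRefls_subset_Sa (hLgen s hs), hτ, hprod, hlen⟩, hP⟩

open AffineWeylSetup HeckeAlg in
/-- **Section 5.** For every coweight `λ` of `GL_n`, `Θ⁻_λ` has a minimal expression: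
`Θ⁻_λ = T̃_{t_1}^{ε_1} ⋯ T̃_{t_r}^{ε_r} T̃_τ` for some reduced expression
`t_λ = t_1 ⋯ t_r τ` (`t_i ∈ S_a`, `τ ∈ Ω`) and signs `ε_i ∈ {1, -1}`. -/
theorem gln_minimal_expression
    {Wt H : Type} [Group Wt] [Ring H] [Algebra HckA H]
    (n : ℕ)
    (S : AffineWeylSetup (Fin n → ℤ) (Fin n → ℤ) (Equiv.Perm (Fin n)) Wt)
    (hgl : IsGLn n S) (hh : HeckeAlg S H)
    (lam l1 l2 : Fin n → ℤ) (h1 : S.Antidominant l1) (h2 : S.Antidominant l2)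
    (hdec : lam = l1 - l2) :
    ∃ (P : List (Wt × Bool)) (τ : Wt),
      S.IsReducedWord (P.map Prod.fst) τ (S.t lam) ∧
      hh.ThetaAnti l1 l2 =
        (P.map (fun pr => if pr.2 then hh.Tt pr.1 else Ring.inverse (hh.Tt pr.1))).prod *
          hh.Tt τ :=
  gln_minimal_expression_general n S hgl hh lam l1 l2 hdec
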